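/- arXiv:1801.01578 — 2 statements merged into one kernel-verified Lean document; each statement's English description precedes it below -/
import Mathlib

section
/- Consider the saddle point matrices A_ε = [[A, B^T],[B, −Σ_ε]] and A_0 = [[A, B^T],[B, 0]], where A is symmetric positive definite, B has full row space equal to Im B_D × {0} with B = [B_D, 0] and B_D symmetric positive semidefinite, and Σ_ε = ε B_D with ε ≥ 0. Let (u_ε, λ_ε) solve A u_ε + B^T λ_ε = F, B u_ε − ε B_D λ_ε = 0 with λ_ε ∈ Im B_D, and (u_0, λ_0) solve A u_0 + B^T λ_0 = F, B u_0 = 0 with λ_0 ∈ Im B_D. Then ‖u_ε − u_0‖ → 0 as ε → 0⁺; moreover ‖u_ε − u_0‖² ≤ (ε / μ_min(A)) ⟨B_D λ_ε, λ_0⟩. -/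
/-!
Subtracting the two systems, the error `e = u_ε - u₀` satisfies `A e = Bᵀ (λ₀ - λ_ε)` and
`B e = ε B_D λ_ε`, so `⟨A e, e⟩ = ε ⟨B_D λ_ε, λ₀ - λ_ε⟩`. Coercivity of `A` turns this into
`μ ‖e‖² ≤ ε (⟨B_D λ_ε, λ₀⟩ - ⟨B_D λ_ε, λ_ε⟩)`; dropping the nonnegative term gives the stated
bound, and completing the square in the `B_D`-seminorm bounds the bracket by `⟨B_D λ₀, λ₀⟩ / 4`
uniformly in `ε`, so `‖e‖² = O(ε)`.
-/

open Matrix Filter Topology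

namespace Matrix.PosSemidef

variable {κ : Type*} [Fintype κ]

theorem mulVec_dotProduct_sub_le {S : Matrix κ κ ℝ} (hS : S.PosSemidef) (x y : κ → ℝ) :
    (S *ᵥ y) ⬝ᵥ x - (S *ᵥ y) ⬝ᵥ y ≤ x ⬝ᵥ (S *ᵥ x) / 4 := by
  have hsymm : x ⬝ᵥ (S *ᵥ y) = y ⬝ᵥ (S *ᵥ x) := by
    rw [dotProduct_mulVec, ← vecMul_transpose, (by simpa using hS.isHermitian : S.IsSymm).eq,
      dotProduct_comm]
  -- complete the square: `0 ≤ ⟨S (y - x/2), y - x/2⟩`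
  have hsq := hS.dotProduct_mulVec_nonneg (y - (2 : ℝ)⁻¹ • x)
  simp only [star_trivial, mulVec_sub, mulVec_smul, sub_dotProduct, dotProduct_sub,
    smul_dotProduct, dotProduct_smul, smul_eq_mul] at hsq
  rw [dotProduct_comm (S *ᵥ y) x, dotProduct_comm (S *ᵥ y) y]
  linarith

end Matrix.PosSemidef

section SaddlePoint

variable {ι κ : Type*} [Fintype ι] [Fintype κ]

theorem saddlePoint_error_energy_eq (A : Matrix ι ι ℝ) (B : Matrix κ ι ℝ) (S : Matrix κ κ ℝ)
    (F u u₀ : ι → ℝ) (lam lam₀ : κ → ℝ) (ε : ℝ)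
    (h₁ : A *ᵥ u + Bᵀ *ᵥ lam = F) (h₂ : B *ᵥ u - ε • (S *ᵥ lam) = 0)
    (h₁₀ : A *ᵥ u₀ + Bᵀ *ᵥ lam₀ = F) (h₂₀ : B *ᵥ u₀ = 0) :
    (A *ᵥ (u - u₀)) ⬝ᵥ (u - u₀) = ε * ((S *ᵥ lam) ⬝ᵥ lam₀ - (S *ᵥ lam) ⬝ᵥ lam) := by
  have hA : A *ᵥ (u - u₀) = Bᵀ *ᵥ (lam₀ - lam) := by
    rw [← h₁₀] at h₁
    rw [mulVec_sub, mulVec_sub]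
    linear_combination (norm := module) h₁
  have hB : B *ᵥ (u - u₀) = ε • (S *ᵥ lam) := by
    rwa [mulVec_sub, h₂₀, sub_zero, ← sub_eq_zero]
  rw [hA, dotProduct_comm, dotProduct_mulVec, vecMul_transpose, hB, smul_dotProduct,
    dotProduct_sub, smul_eq_mul]

theorem saddlePoint_coercive_error_le (A : Matrix ι ι ℝ) (B : Matrix κ ι ℝ) (S : Matrix κ κ ℝ)
    (μ : ℝ) (hμ : ∀ x : ι → ℝ, μ * (x ⬝ᵥ x) ≤ (A *ᵥ x) ⬝ᵥ x)
    (F u u₀ : ι → ℝ) (lam lam₀ : κ → ℝ) (ε : ℝ)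
    (h₁ : A *ᵥ u + Bᵀ *ᵥ lam = F) (h₂ : B *ᵥ u - ε • (S *ᵥ lam) = 0)
    (h₁₀ : A *ᵥ u₀ + Bᵀ *ᵥ lam₀ = F) (h₂₀ : B *ᵥ u₀ = 0) :
    μ * ((u - u₀) ⬝ᵥ (u - u₀)) ≤ ε * ((S *ᵥ lam) ⬝ᵥ lam₀ - (S *ᵥ lam) ⬝ᵥ lam) :=
  saddlePoint_error_energy_eq A B S F u u₀ lam lam₀ ε h₁ h₂ h₁₀ h₂₀ ▸ hμ (u - u₀)

end SaddlePoint

theorem tendsto_sqrt_nhdsGT_zero_of_le_mul {f : ℝ → ℝ} (C : ℝ) (hf : ∀ ε > 0, f ε ≤ ε * C) :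
    Tendsto (fun ε => √(f ε)) (𝓝[>] 0) (𝓝 0) := by
  have hlim : Tendsto (fun ε : ℝ => √(ε * C)) (𝓝[>] 0) (𝓝 0) := by
    have hcont : Continuous fun ε : ℝ => √(ε * C) := by fun_prop
    simpa using (hcont.tendsto 0).mono_left nhdsWithin_le_nhds
  refine squeeze_zero' (Eventually.of_forall fun _ => Real.sqrt_nonneg _) ?_ hlim
  filter_upwards [self_mem_nhdsWithin] with ε hε
  exact Real.sqrt_le_sqrt (hf ε hε)

theorem stmt15_general {n n0 : ℕ}
    (A : Matrix (Fin n ⊕ Fin n0) (Fin n ⊕ Fin n0) ℝ)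
    (μmin : ℝ) (hμmin : 0 < μmin)
    (hμ : ∀ x : Fin n ⊕ Fin n0 → ℝ, μmin * (x ⬝ᵥ x) ≤ (A *ᵥ x) ⬝ᵥ x)
    (BD : Matrix (Fin n) (Fin n) ℝ) (hBD : BD.PosSemidef)
    (B : Matrix (Fin n) (Fin n ⊕ Fin n0) ℝ)
    (F : Fin n ⊕ Fin n0 → ℝ)
    (u : ℝ → (Fin n ⊕ Fin n0 → ℝ)) (lam : ℝ → (Fin n → ℝ))
    (heq1 : ∀ ε : ℝ, 0 ≤ ε → A *ᵥ u ε + Bᵀ *ᵥ lam ε = F)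
    (heq2 : ∀ ε : ℝ, 0 ≤ ε → B *ᵥ u ε - ε • (BD *ᵥ lam ε) = 0)
    (u0 : Fin n ⊕ Fin n0 → ℝ) (lam0 : Fin n → ℝ)
    (heq10 : A *ᵥ u0 + Bᵀ *ᵥ lam0 = F)
    (heq20 : B *ᵥ u0 = 0) :
    Tendsto (fun ε => Real.sqrt ((u ε - u0) ⬝ᵥ (u ε - u0)))
        (nhdsWithin 0 (Set.Ioi 0)) (nhds 0) ∧
    ∀ ε : ℝ, 0 ≤ ε →
      (u ε - u0) ⬝ᵥ (u ε - u0) ≤ (ε / μmin) * ((BD *ᵥ lam ε) ⬝ᵥ lam0) := by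
  have key (ε : ℝ) (hε : 0 ≤ ε) := saddlePoint_coercive_error_le A B BD μmin hμ F (u ε) u0
    (lam ε) lam0 ε (heq1 ε hε) (heq2 ε hε) heq10 heq20
  refine ⟨tendsto_sqrt_nhdsGT_zero_of_le_mul (lam0 ⬝ᵥ (BD *ᵥ lam0) / 4 / μmin) fun ε hε => ?_,
    fun ε hε => ?_⟩
  · have hbracket := hBD.mulVec_dotProduct_sub_le lam0 (lam ε)
    rw [← mul_div_assoc, le_div_iff₀ hμmin, mul_comm]
    exact (key ε hε.le).trans (mul_le_mul_of_nonneg_left hbracket hε.le)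
  · have hnonneg : 0 ≤ (BD *ᵥ lam ε) ⬝ᵥ lam ε := by
      simpa [dotProduct_comm] using hBD.dotProduct_mulVec_nonneg (lam ε)
    rw [div_mul_eq_mul_div, le_div_iff₀ hμmin, mul_comm]
    nlinarith [key ε hε]

theorem stmt15 {n n0 : ℕ}
    (A : Matrix (Fin n ⊕ Fin n0) (Fin n ⊕ Fin n0) ℝ) (hA : A.PosDef)
    (μmin : ℝ) (hμmin : 0 < μmin)
    (hμ : ∀ x : Fin n ⊕ Fin n0 → ℝ, μmin * (x ⬝ᵥ x) ≤ (A *ᵥ x) ⬝ᵥ x)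
    (BD : Matrix (Fin n) (Fin n) ℝ) (hBD : BD.PosSemidef)
    (B : Matrix (Fin n) (Fin n ⊕ Fin n0) ℝ)
    (hB : B = Matrix.of fun i => Sum.elim (BD i) 0)
    (F : Fin n ⊕ Fin n0 → ℝ)
    (u : ℝ → (Fin n ⊕ Fin n0 → ℝ)) (lam : ℝ → (Fin n → ℝ))
    (heq1 : ∀ ε : ℝ, 0 ≤ ε → A *ᵥ u ε + Bᵀ *ᵥ lam ε = F)
    (heq2 : ∀ ε : ℝ, 0 ≤ ε → B *ᵥ u ε - ε • (BD *ᵥ lam ε) = 0)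
    (hlam : ∀ ε : ℝ, 0 ≤ ε → lam ε ∈ LinearMap.range BD.mulVecLin)
    (u0 : Fin n ⊕ Fin n0 → ℝ) (lam0 : Fin n → ℝ)
    (heq10 : A *ᵥ u0 + Bᵀ *ᵥ lam0 = F)
    (heq20 : B *ᵥ u0 = 0)
    (hlam0 : lam0 ∈ LinearMap.range BD.mulVecLin) :
    Tendsto (fun ε => Real.sqrt ((u ε - u0) ⬝ᵥ (u ε - u0)))
        (nhdsWithin 0 (Set.Ioi 0)) (nhds 0) ∧
    ∀ ε : ℝ, 0 ≤ ε →
      (u ε - u0) ⬝ᵥ (u ε - u0) ≤ (ε / μmin) * ((BD *ᵥ lam ε) ⬝ᵥ lam0) :=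
  stmt15_general A μmin hμmin hμ BD hBD B F u lam heq1 heq2 u0 lam0 heq10 heq20
end

section
/- Let A be symmetric positive definite, B_D symmetric positive semidefinite, S symmetric positive definite, with B A^{-1} B^T = B_D S^{-1} B_D (B = [B_D, 0]). Let P = diag(A, B A^{-1} B^T) and A_ε = [[A, B^T],[B, −ε B_D]]. If (u, λ), with λ ∈ Im B_D, is a generalized eigenpair A_ε (u, λ) = ν P (u, λ) with ν ∉ {0, 1}, then ν − 1/(ν − 1) = −ε ⟨B_D λ, λ⟩ / ⟨B_D S^{-1} B_D λ, λ⟩. -/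
/-!
The first block row gives `Bᵀ λ = (ν - 1) A u`, hence `B A⁻¹ Bᵀ λ = (ν - 1) B u`. Pairing the
second row with `λ` leaves two scalar equations in `c = ⟨B u, λ⟩` and `m = ⟨B_D S⁻¹ B_D λ, λ⟩`,
namely `c - ε ⟨B_D λ, λ⟩ = ν m` and `m = (ν - 1) c`; eliminating `c` gives the identity once
`m ≠ 0`. Since `λ ∈ Im B_D` and `ker B_D ⊥ Im B_D`, `w = B_D λ ≠ 0`, so `m = ⟨S⁻¹ w, w⟩ > 0`.
-/

open Matrix

namespace Matrix

variable {ι κ μ R : Type*}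

section Symmetric

variable [Fintype ι]

theorem IsSymm.mulVec_dotProduct_comm [CommSemiring R] {M : Matrix ι ι R} (hM : M.IsSymm)
    (v w : ι → R) : (M *ᵥ v) ⬝ᵥ w = v ⬝ᵥ (M *ᵥ w) := by
  rw [dotProduct_comm, dotProduct_mulVec, ← mulVec_transpose, hM.eq, dotProduct_comm]

theorem IsSymm.mulVec_ne_zero_of_mem_range [CommRing R] [LinearOrder R] [IsStrictOrderedRing R]
    {M : Matrix ι ι R} (hM : M.IsSymm) {x : ι → R} (hx : x ∈ LinearMap.range M.mulVecLin)
    (hx0 : x ≠ 0) : M *ᵥ x ≠ 0 := by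
  obtain ⟨y, rfl⟩ := hx
  rw [mulVecLin_apply] at hx0 ⊢
  intro hMx
  apply hx0
  rw [← dotProduct_self_eq_zero, hM.mulVec_dotProduct_comm, hMx, dotProduct_zero]

theorem IsSymm.mul_mul_mulVec_dotProduct [CommSemiring R] {M N : Matrix ι ι R} (hM : M.IsSymm)
    (x : ι → R) : (M * N * M) *ᵥ x ⬝ᵥ x = (M *ᵥ x) ⬝ᵥ (N *ᵥ (M *ᵥ x)) := by
  rw [← mulVec_mulVec, ← mulVec_mulVec, hM.mulVec_dotProduct_comm, dotProduct_comm]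

theorem PosDef.mul_mul_mulVec_dotProduct_pos {M N : Matrix ι ι ℝ} (hN : N.PosDef)
    (hM : M.IsSymm) {x : ι → ℝ} (hx : M *ᵥ x ≠ 0) : 0 < (M * N * M) *ᵥ x ⬝ᵥ x := by
  simpa [hM.mul_mul_mulVec_dotProduct] using hN.dotProduct_mulVec_pos hx

end Symmetric

variable [Fintype κ] [DecidableEq κ] [Fintype μ] [Field R]

theorem mul_inv_mul_mulVec_of_mulVec_eq {A : Matrix κ κ R} (hA : IsUnit A)
    (B : Matrix ι κ R) {C : Matrix κ μ R} {v : κ → R} {lam : μ → R}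
    (h : C *ᵥ lam = A *ᵥ v) : (B * A⁻¹ * C) *ᵥ lam = B *ᵥ v := by
  rw [← mulVec_mulVec, h, mulVec_mulVec, Matrix.mul_assoc,
    nonsing_inv_mul A (A.isUnit_iff_isUnit_det.mp hA), Matrix.mul_one]

end Matrix

theorem stmt19_general {n n0 : ℕ}
    (A : Matrix (Fin n ⊕ Fin n0) (Fin n ⊕ Fin n0) ℝ) (hA : A.PosDef)
    (BD S : Matrix (Fin n) (Fin n) ℝ)
    (hBD : BD.PosSemidef) (hS : S.PosDef)
    (B : Matrix (Fin n) (Fin n ⊕ Fin n0) ℝ)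
    (hSchur : B * A⁻¹ * Bᵀ = BD * S⁻¹ * BD)
    (ε : ℝ)
    (u : Fin n ⊕ Fin n0 → ℝ) (lam : Fin n → ℝ)
    (hlam : lam ∈ LinearMap.range BD.mulVecLin) (hlam0 : lam ≠ 0)
    (ν : ℝ) (hν1 : ν ≠ 1)
    (heig1 : A *ᵥ u + Bᵀ *ᵥ lam = ν • (A *ᵥ u))
    (heig2 : B *ᵥ u - ε • (BD *ᵥ lam) = ν • ((B * A⁻¹ * Bᵀ) *ᵥ lam)) :
    ν - 1 / (ν - 1) =
      -(ε * (((BD *ᵥ lam) ⬝ᵥ lam) / (((BD * S⁻¹ * BD) *ᵥ lam) ⬝ᵥ lam))) := by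
  have hBDsymm : BD.IsSymm := by simpa using hBD.isHermitian
  have hm_pos : 0 < (BD * S⁻¹ * BD) *ᵥ lam ⬝ᵥ lam :=
    hS.inv.mul_mul_mulVec_dotProduct_pos hBDsymm (hBDsymm.mulVec_ne_zero_of_mem_range hlam hlam0)
  have hfirst : Bᵀ *ᵥ lam = A *ᵥ ((ν - 1) • u) := by
    rw [mulVec_smul, sub_smul, one_smul]
    linear_combination (norm := module) heig1
  have helim := mul_inv_mul_mulVec_of_mulVec_eq hA.isUnit B hfirst
  have hpaired := congrArg (· ⬝ᵥ lam) heig2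
  simp only [sub_dotProduct, smul_dotProduct, smul_eq_mul, hSchur] at hpaired
  have hm_eq : (BD * S⁻¹ * BD) *ᵥ lam ⬝ᵥ lam = (ν - 1) * (B *ᵥ u ⬝ᵥ lam) := by
    rw [← hSchur, helim, mulVec_smul, smul_dotProduct, smul_eq_mul]
  have hν1' : ν - 1 ≠ 0 := sub_ne_zero.mpr hν1
  field_simp
  linear_combination (-(ν - 1)) * hpaired - hm_eq

theorem stmt19 {n n0 : ℕ}
    (A : Matrix (Fin n ⊕ Fin n0) (Fin n ⊕ Fin n0) ℝ) (hA : A.PosDef)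
    (BD S : Matrix (Fin n) (Fin n) ℝ)
    (hBD : BD.PosSemidef) (hS : S.PosDef)
    (B : Matrix (Fin n) (Fin n ⊕ Fin n0) ℝ)
    (hB : B = Matrix.of fun i => Sum.elim (BD i) 0)
    (hSchur : B * A⁻¹ * Bᵀ = BD * S⁻¹ * BD)
    (ε : ℝ) (hε : 0 ≤ ε)
    (u : Fin n ⊕ Fin n0 → ℝ) (lam : Fin n → ℝ)
    (hlam : lam ∈ LinearMap.range BD.mulVecLin) (hlam0 : lam ≠ 0)
    (ν : ℝ) (hν0 : ν ≠ 0) (hν1 : ν ≠ 1)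
    (heig1 : A *ᵥ u + Bᵀ *ᵥ lam = ν • (A *ᵥ u))
    (heig2 : B *ᵥ u - ε • (BD *ᵥ lam) = ν • ((B * A⁻¹ * Bᵀ) *ᵥ lam)) :
    ν - 1 / (ν - 1) =
      -(ε * (((BD *ᵥ lam) ⬝ᵥ lam) / (((BD * S⁻¹ * BD) *ᵥ lam) ⬝ᵥ lam))) :=
  stmt19_general A hA BD S hBD hS B hSchur ε u lam hlam hlam0 ν hν1 heig1 heig2
end
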